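/- Let F : ℤ≥0 → [0,1] be bounded, let m be a positive integer, and suppose that for all k₁, k₂ ∈ ℤ≥0: Δ^{(3)}F(k₁)·ΔF(k₂) + ΔF(k₁)·Δ^{(3)}F(k₂) ≤ 2·Δ^{(2)}F(k₁)·Δ^{(2)}F(k₂). Then the Poisson smoothing f(x) := Σ_{k=0}^∞ e^{−mx}(mx)^k/k! · F(k) satisfies f‴(x)·f′(x) ≤ (f″(x))² for all x ≥ 0. -/

import Mathlib

open Set

/-- The discrete derivative operator `(ΔF)(n) := F(n+1) − F(n)`. -/
def discreteDeriv (F : ℕ → ℝ) : ℕ → ℝ := fun n => F (n + 1) - F n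

/-!
With Poisson weights `w_k(t) = e^{-t} tᵏ/k!` and `P G t := Σₖ w_k(t) G k`, we have
`f x = P F (m x)` and `(P G)' = P (Δ G)`: indeed `e^{t} P G t` is the exponential generating
function of `G`, whose derivative is that of the shifted sequence. Hence
`f^{(ℓ)}(x) = m^ℓ P (Δ^ℓ F) (m x)`. For `t ≥ 0` the weights are nonnegative, so multiplying
the hypothesis by `w_{k₁} w_{k₂}` and summing over all pairs gives `2 P(Δ³F) P(ΔF) ≤ 2 P(Δ²F)²`.
-/

namespace PoissonSmoothing

noncomputable def expGenFun (G : ℕ → ℝ) (t : ℝ) : ℝ :=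
  ∑' k : ℕ, t ^ k / k.factorial * G k

noncomputable def poissonSmoothing (G : ℕ → ℝ) (t : ℝ) : ℝ :=
  ∑' k : ℕ, Real.exp (-t) * t ^ k / k.factorial * G k

variable {G : ℕ → ℝ} {C : ℝ}

lemma abs_discreteDeriv_le (hG : ∀ k, |G k| ≤ C) (k : ℕ) : |discreteDeriv G k| ≤ 2 * C :=
  calc |G (k + 1) - G k| ≤ |G (k + 1)| + |G k| := abs_sub _ _
    _ ≤ 2 * C := by linarith [hG (k + 1), hG k]

lemma abs_iterate_discreteDeriv_le (hG : ∀ k, |G k| ≤ C) (n : ℕ) (k : ℕ) :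
    |discreteDeriv^[n] G k| ≤ 2 ^ n * C := by
  induction n generalizing k with
  | zero => simpa using hG k
  | succ n ih =>
    rw [Function.iterate_succ_apply', pow_succ, mul_comm _ 2, mul_assoc]
    exact abs_discreteDeriv_le ih k

lemma summable_norm_pow_div_factorial_mul (hG : ∀ k, |G k| ≤ C) (t : ℝ) :
    Summable fun k : ℕ => ‖t ^ k / k.factorial * G k‖ := by
  refine .of_nonneg_of_le (fun k => norm_nonneg _) (fun k => ?_)
    ((Real.summable_pow_div_factorial |t|).mul_right C)
  rw [Real.norm_eq_abs, abs_mul, abs_div, abs_pow, Nat.abs_cast]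
  gcongr
  exact hG k

lemma natCast_succ_mul_pow_div_factorial_succ (t : ℝ) (k : ℕ) :
    ((k + 1 : ℕ) : ℝ) * t ^ k / (k + 1).factorial = t ^ k / k.factorial := by
  rw [Nat.factorial_succ, Nat.cast_mul, mul_div_mul_left _ _ (by positivity)]

lemma hasDerivAt_expGenFun (hG : ∀ k, |G k| ≤ C) (t : ℝ) :
    HasDerivAt (expGenFun G) (expGenFun (fun k => G (k + 1)) t) t := by
  set R := |t| + 1
  set u : ℕ → ℝ := fun k => k * R ^ (k - 1) / k.factorial * C
  have hu : Summable u := by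
    rw [← summable_nat_add_iff 1]
    simpa only [u, Nat.add_sub_cancel, natCast_succ_mul_pow_div_factorial_succ]
      using (Real.summable_pow_div_factorial R).mul_right C
  have hderiv (k : ℕ) (s : ℝ) : HasDerivAt (fun s : ℝ => s ^ k / k.factorial * G k)
      (k * s ^ (k - 1) / k.factorial * G k) s :=
    ((hasDerivAt_pow k s).div_const _).mul_const _
  have hbound (k : ℕ) (s : ℝ) (hs : s ∈ Metric.ball (0 : ℝ) R) :
      ‖k * s ^ (k - 1) / k.factorial * G k‖ ≤ u k := by
    rw [mem_ball_zero_iff, Real.norm_eq_abs] at hs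
    rw [Real.norm_eq_abs, abs_mul, abs_div, abs_mul, abs_pow, Nat.abs_cast, Nat.abs_cast]
    dsimp only [u]
    gcongr
    exact hG k
  have ht : t ∈ Metric.ball (0 : ℝ) R := by
    rw [mem_ball_zero_iff, Real.norm_eq_abs]; linarith
  have hsum : Summable fun k : ℕ => k * t ^ (k - 1) / k.factorial * G k :=
    .of_norm (.of_nonneg_of_le (fun k => norm_nonneg _) (fun k => hbound k t ht) hu)
  have hshift :
      ∑' k : ℕ, k * t ^ (k - 1) / k.factorial * G k = expGenFun (fun k => G (k + 1)) t := by
    rw [hsum.tsum_eq_zero_add, Nat.cast_zero, zero_mul, zero_div, zero_mul, zero_add]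
    simp only [expGenFun, Nat.add_sub_cancel, natCast_succ_mul_pow_div_factorial_succ]
  rw [← hshift]
  exact hasDerivAt_tsum_of_isPreconnected hu Metric.isOpen_ball (convex_ball _ _).isPreconnected
    (fun k s _ => hderiv k s) hbound ht (summable_norm_pow_div_factorial_mul hG t).of_norm ht

lemma expGenFun_discreteDeriv (hG : ∀ k, |G k| ≤ C) (t : ℝ) :
    expGenFun (discreteDeriv G) t = expGenFun (fun k => G (k + 1)) t - expGenFun G t := by
  rw [expGenFun, expGenFun, expGenFun, ← Summable.tsum_sub
    (summable_norm_pow_div_factorial_mul (fun k => hG (k + 1)) t).of_norm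
    (summable_norm_pow_div_factorial_mul hG t).of_norm]
  exact tsum_congr fun k => by rw [discreteDeriv]; ring

lemma poissonSmoothing_eq_exp_mul_expGenFun (G : ℕ → ℝ) (t : ℝ) :
    poissonSmoothing G t = Real.exp (-t) * expGenFun G t := by
  rw [poissonSmoothing, expGenFun, ← tsum_mul_left]
  exact tsum_congr fun k => by ring

lemma hasDerivAt_poissonSmoothing (hG : ∀ k, |G k| ≤ C) (t : ℝ) :
    HasDerivAt (poissonSmoothing G) (poissonSmoothing (discreteDeriv G) t) t := by
  have hexp : HasDerivAt (fun s => Real.exp (-s)) (-Real.exp (-t)) t := by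
    simpa using (hasDerivAt_neg t).exp
  rw [funext (poissonSmoothing_eq_exp_mul_expGenFun G), poissonSmoothing_eq_exp_mul_expGenFun,
    expGenFun_discreteDeriv hG]
  exact (hexp.fun_mul (hasDerivAt_expGenFun hG t)).congr_deriv (by ring)

lemma iteratedDeriv_poissonSmoothing_comp_mul (hG : ∀ k, |G k| ≤ C) (c : ℝ) (n : ℕ) :
    iteratedDeriv n (fun x => poissonSmoothing G (c * x)) =
      fun x => c ^ n * poissonSmoothing (discreteDeriv^[n] G) (c * x) := by
  induction n with
  | zero => simp
  | succ n ih =>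
    ext x
    have hinner : HasDerivAt (fun x => c * x) c x := by
      simpa using (hasDerivAt_id x).const_mul c
    have h := ((hasDerivAt_poissonSmoothing (abs_iterate_discreteDeriv_le hG n) (c * x)).comp x
      hinner).const_mul (c ^ n)
    rw [iteratedDeriv_succ, ih]
    exact h.deriv.trans (by rw [Function.iterate_succ_apply', pow_succ]; ring)

lemma tsum_mul_tsum_le_sq {c A B D : ℕ → ℝ} (hc : ∀ k, 0 ≤ c k)
    (hA : Summable fun k => ‖c k * A k‖) (hB : Summable fun k => ‖c k * B k‖)
    (hD : Summable fun k => ‖c k * D k‖)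
    (hABD : ∀ k₁ k₂, A k₁ * B k₂ + B k₁ * A k₂ ≤ 2 * (D k₁ * D k₂)) :
    (∑' k, c k * A k) * (∑' k, c k * B k) ≤ (∑' k, c k * D k) ^ 2 := by
  have hAB := summable_mul_of_summable_norm hA hB
  have hBA := summable_mul_of_summable_norm hB hA
  have hDD := summable_mul_of_summable_norm hD hD
  have hpairs :
      ∑' z : ℕ × ℕ, (c z.1 * A z.1 * (c z.2 * B z.2) + c z.1 * B z.1 * (c z.2 * A z.2)) ≤
        ∑' z : ℕ × ℕ, 2 * (c z.1 * D z.1 * (c z.2 * D z.2)) := by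
    refine (hAB.add hBA).tsum_le_tsum (fun z => ?_) (hDD.mul_left 2)
    linear_combination mul_le_mul_of_nonneg_left (hABD z.1 z.2) (mul_nonneg (hc z.1) (hc z.2))
  rw [hAB.tsum_add hBA, tsum_mul_left, ← tsum_mul_tsum_of_summable_norm hA hB,
    ← tsum_mul_tsum_of_summable_norm hB hA, ← tsum_mul_tsum_of_summable_norm hD hD] at hpairs
  linarith

lemma poissonSmoothing_mul_le_sq {A B D : ℕ → ℝ} {Ca Cb Cd : ℝ} (hA : ∀ k, |A k| ≤ Ca)
    (hB : ∀ k, |B k| ≤ Cb) (hD : ∀ k, |D k| ≤ Cd)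
    (hABD : ∀ k₁ k₂, A k₁ * B k₂ + B k₁ * A k₂ ≤ 2 * (D k₁ * D k₂))
    {t : ℝ} (ht : 0 ≤ t) :
    poissonSmoothing A t * poissonSmoothing B t ≤ poissonSmoothing D t ^ 2 := by
  have h : expGenFun A t * expGenFun B t ≤ expGenFun D t ^ 2 :=
    tsum_mul_tsum_le_sq (fun k => by positivity) (summable_norm_pow_div_factorial_mul hA t)
      (summable_norm_pow_div_factorial_mul hB t) (summable_norm_pow_div_factorial_mul hD t) hABD
  simp only [poissonSmoothing_eq_exp_mul_expGenFun]
  linear_combination Real.exp (-t) ^ 2 * h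

end PoissonSmoothing

open PoissonSmoothing in
theorem stmt7_general
    (F : ℕ → ℝ) (hF : ∀ k, F k ∈ Set.Icc (0 : ℝ) 1)
    (m : ℕ)
    (hineq : ∀ k₁ k₂ : ℕ,
      discreteDeriv^[3] F k₁ * discreteDeriv F k₂ +
        discreteDeriv F k₁ * discreteDeriv^[3] F k₂ ≤
      2 * (discreteDeriv^[2] F k₁ * discreteDeriv^[2] F k₂))
    (f : ℝ → ℝ)
    (hf : ∀ x : ℝ, f x =
      ∑' k : ℕ, Real.exp (-(m * x)) * (m * x) ^ k / (Nat.factorial k) * F k) :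
    ∀ x : ℝ, 0 ≤ x →
      iteratedDeriv 3 f x * iteratedDeriv 1 f x ≤ (iteratedDeriv 2 f x) ^ 2 := by
  intro x hx
  have hF_abs : ∀ k, |F k| ≤ 1 := fun k => abs_le.2 ⟨by linarith [(hF k).1], (hF k).2⟩
  have hΔF := abs_iterate_discreteDeriv_le hF_abs
  have hf_eq : f = fun x => poissonSmoothing F (m * x) := funext hf
  have key : poissonSmoothing (discreteDeriv^[3] F) (m * x) *
      poissonSmoothing (discreteDeriv^[1] F) (m * x) ≤
        poissonSmoothing (discreteDeriv^[2] F) (m * x) ^ 2 :=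
    poissonSmoothing_mul_le_sq (hΔF 3) (hΔF 1) (hΔF 2) hineq (by positivity)
  simp only [hf_eq, iteratedDeriv_poissonSmoothing_comp_mul hF_abs]
  linear_combination (m : ℝ) ^ 4 * key

/-- Let `F : ℤ≥0 → [0,1]` be bounded and `m` a positive
integer, and suppose for all `k₁, k₂`:
`Δ³F(k₁)·ΔF(k₂) + ΔF(k₁)·Δ³F(k₂) ≤ 2·Δ²F(k₁)·Δ²F(k₂)`. Then the Poisson
smoothing `f(x) := Σ_k e^{−mx}(mx)^k/k! · F(k)` satisfies
`f‴(x)·f′(x) ≤ (f″(x))²` for all `x ≥ 0`. -/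
theorem stmt7
    (F : ℕ → ℝ) (hF : ∀ k, F k ∈ Set.Icc (0 : ℝ) 1)
    (m : ℕ) (hm : 0 < m)
    (hineq : ∀ k₁ k₂ : ℕ,
      discreteDeriv^[3] F k₁ * discreteDeriv F k₂ +
        discreteDeriv F k₁ * discreteDeriv^[3] F k₂ ≤
      2 * (discreteDeriv^[2] F k₁ * discreteDeriv^[2] F k₂))
    (f : ℝ → ℝ)
    (hf : ∀ x : ℝ, f x =
      ∑' k : ℕ, Real.exp (-(m * x)) * (m * x) ^ k / (Nat.factorial k) * F k) :
    ∀ x : ℝ, 0 ≤ x →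
      iteratedDeriv 3 f x * iteratedDeriv 1 f x ≤ (iteratedDeriv 2 f x) ^ 2 :=
  stmt7_general F hF m hineq f hf
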